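/- arXiv:2004.01522 — 2 statements merged into one kernel-verified Lean document; each statement's English description precedes it below -/
import Mathlib

section
/- The dual scaling matrix with H_i = Q_i is a scalar multiple of the identity: (N·I²/(2σ_0))·I_N + Σ_{i=1}^{I} A_i Q_i⁻¹ A_iᵀ = ( N·I²/(2σ_0) + Σ_{i=1}^{I} (1 + γ_i²)/(σ_i·(2 + γ_i²)) )·I_N; in particular this matrix is positive definite and invertible. -/
open Matrix BigOperators Finset

noncomputable section

/-- The 2×2 block `M_i` with rows `(1, γ)` and `(γ, γ²)`. -/
def Mblk (γ : ℝ) : Matrix (Fin 2) (Fin 2) ℝ := !![1, γ; γ, γ ^ 2]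

/-- `Amat N γ` is the Kronecker product `I_N ⊗ (1 γ)` of the `N × N` identity with the
row vector `(1, γ)`, an `N × 2N` matrix (columns indexed by `Fin N × Fin 2`). -/
def Amat (N : ℕ) (γ : ℝ) : Matrix (Fin N) (Fin N × Fin 2) ℝ :=
  Matrix.of fun j p => (1 : Matrix (Fin N) (Fin N) ℝ) j p.1 * ![1, γ] p.2

/-- `Qmat N σ γ = σ (I_{2N} + I_N ⊗ M γ)`. -/
def Qmat (N : ℕ) (σ γ : ℝ) : Matrix (Fin N × Fin 2) (Fin N × Fin 2) ℝ :=
  σ • ((1 : Matrix (Fin N × Fin 2) (Fin N × Fin 2) ℝ) +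
    Matrix.kroneckerMap (· * ·) (1 : Matrix (Fin N) (Fin N) ℝ) (Mblk γ))

/-! With `w = (1, γ)` we have `M = w wᵀ`, so `Q = σ (I_N ⊗ (I₂ + w wᵀ))` and `A = I_N ⊗ wᵀ`, whence
`A Q⁻¹ Aᵀ = σ⁻¹ (wᵀ (I₂ + w wᵀ)⁻¹ w) I_N`. As `(I₂ + w wᵀ) w = (1 + |w|²) w`, the quadratic form is
`|w|² / (1 + |w|²) = (1 + γ²) / (2 + γ²)`. The resulting scalar is positive, so the matrix is
positive definite. -/

namespace Matrix

variable {n K : Type*} [Fintype n] [DecidableEq n] [Field K]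

theorem inv_mulVec_eq_inv_smul_of_mulVec_eq_smul {B : Matrix n n K} (hB : IsUnit B.det)
    {c : K} {w : n → K} (h : B *ᵥ w = c • w) : B⁻¹ *ᵥ w = c⁻¹ • w := by
  have hw : w = c • B⁻¹ *ᵥ w := by
    rw [← mulVec_smul, ← h, mulVec_mulVec, nonsing_inv_mul _ hB, one_mulVec]
  rcases eq_or_ne c 0 with rfl | hc
  · rw [hw, zero_smul, mulVec_zero, smul_zero]
  · rw [hw, smul_smul, inv_mul_cancel₀ hc, one_smul, ← hw]

theorem one_add_vecMulVec_self_mulVec (w : n → K) :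
    (1 + vecMulVec w w) *ᵥ w = (1 + w ⬝ᵥ w) • w := by
  rw [add_mulVec, one_mulVec, vecMulVec_mulVec, op_smul_eq_smul, add_smul, one_smul]

theorem det_one_add_vecMulVec_self (w : n → K) : (1 + vecMulVec w w).det = 1 + w ⬝ᵥ w := by
  rw [vecMulVec_eq Unit, det_one_add_replicateCol_mul_replicateRow]

theorem dotProduct_inv_one_add_vecMulVec_self_mulVec [LinearOrder K] [IsStrictOrderedRing K]
    (w : n → K) : w ⬝ᵥ (1 + vecMulVec w w)⁻¹ *ᵥ w = w ⬝ᵥ w / (1 + w ⬝ᵥ w) := by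
  have hpos : 0 < 1 + w ⬝ᵥ w :=
    add_pos_of_pos_of_nonneg one_pos (Finset.sum_nonneg fun i _ => mul_self_nonneg (w i))
  have hdet : IsUnit (1 + vecMulVec w w).det := by
    rw [det_one_add_vecMulVec_self]; exact hpos.ne'.isUnit
  rw [inv_mulVec_eq_inv_smul_of_mulVec_eq_smul hdet (one_add_vecMulVec_self_mulVec w),
    dotProduct_smul, smul_eq_mul, div_eq_inv_mul]

theorem nonsing_inv_smul (k : K) (A : Matrix n n K) : (k • A)⁻¹ = k⁻¹ • A⁻¹ := by
  rcases eq_or_ne k 0 with rfl | hk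
  · simp
  by_cases hA : IsUnit A.det
  · exact inv_smul' A (Units.mk0 k hk) hA
  · rw [nonsing_inv_apply_not_isUnit _ hA, smul_zero, nonsing_inv_apply_not_isUnit]
    simpa [det_smul, isUnit_iff_ne_zero, hk] using hA

end Matrix

open scoped Kronecker

lemma Mblk_eq_vecMulVec (γ : ℝ) : Mblk γ = vecMulVec ![1, γ] ![1, γ] := by
  ext i j; fin_cases i <;> fin_cases j <;> simp [Mblk, vecMulVec, sq]

lemma Qmat_eq_smul_one_kronecker (N : ℕ) (σ γ : ℝ) :
    Qmat N σ γ = σ • (1 ⊗ₖ (1 + vecMulVec ![1, γ] ![1, γ])) := by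
  rw [Qmat, kronecker_add, one_kronecker_one, Mblk_eq_vecMulVec]

lemma inv_Qmat (N : ℕ) (σ γ : ℝ) :
    (Qmat N σ γ)⁻¹ =
      σ⁻¹ • ((1 : Matrix (Fin N) (Fin N) ℝ) ⊗ₖ (1 + vecMulVec ![1, γ] ![1, γ])⁻¹) := by
  rw [Qmat_eq_smul_one_kronecker, nonsing_inv_smul, inv_kronecker, inv_one]

lemma Amat_mul_one_kronecker_mul_transpose (N : ℕ) (γ : ℝ) (B : Matrix (Fin 2) (Fin 2) ℝ) :
    Amat N γ * ((1 : Matrix (Fin N) (Fin N) ℝ) ⊗ₖ B) * (Amat N γ)ᵀ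
      = (![1, γ] ⬝ᵥ B *ᵥ ![1, γ]) • (1 : Matrix (Fin N) (Fin N) ℝ) := by
  ext j k
  rcases eq_or_ne j k with rfl | hjk
  · simp [Amat, mul_apply, one_apply, Fintype.sum_prod_type, dotProduct, mulVec, Fin.sum_univ_two]
    ring
  · simp [Amat, mul_apply, one_apply, Fintype.sum_prod_type, hjk]

lemma Amat_mul_inv_Qmat_mul_transpose (N : ℕ) (σ γ : ℝ) :
    Amat N γ * (Qmat N σ γ)⁻¹ * (Amat N γ)ᵀ
      = ((1 + γ ^ 2) / (σ * (2 + γ ^ 2))) • (1 : Matrix (Fin N) (Fin N) ℝ) := by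
  have hw : ![1, γ] ⬝ᵥ ![1, γ] = 1 + γ ^ 2 := by simp [dotProduct, Fin.sum_univ_two, sq]
  rw [inv_Qmat, Matrix.mul_smul, Matrix.smul_mul, Amat_mul_one_kronecker_mul_transpose,
    dotProduct_inv_one_add_vecMulVec_self_mulVec, hw, smul_smul, mul_comm σ, ← div_div]
  congr 1
  ring

theorem stmt8_general
    (N I : ℕ) (hN : 2 ≤ N) (hI : 1 ≤ I) (σ0 : ℝ) (hσ0 : 0 < σ0)
    (γ σ : Fin I → ℝ) (hσ : ∀ i, 0 < σ i) :
    let Λ0 : Matrix (Fin N) (Fin N) ℝ :=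
      (((N : ℝ) * (I : ℝ) ^ 2) / (2 * σ0)) • (1 : Matrix (Fin N) (Fin N) ℝ) +
        ∑ i, Amat N (γ i) * (Qmat N (σ i) (γ i))⁻¹ * (Amat N (γ i))ᵀ
    Λ0 = (((N : ℝ) * (I : ℝ) ^ 2) / (2 * σ0)
            + ∑ i, (1 + γ i ^ 2) / (σ i * (2 + γ i ^ 2))) • (1 : Matrix (Fin N) (Fin N) ℝ) ∧
      Λ0.PosDef ∧ IsUnit Λ0 := by
  intro Λ0
  have hΛ0 : Λ0 = (((N : ℝ) * (I : ℝ) ^ 2) / (2 * σ0)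
      + ∑ i, (1 + γ i ^ 2) / (σ i * (2 + γ i ^ 2))) • (1 : Matrix (Fin N) (Fin N) ℝ) := by
    simp only [Λ0, Amat_mul_inv_Qmat_mul_transpose, ← Finset.sum_smul, ← add_smul]
  have hc : 0 < ((N : ℝ) * (I : ℝ) ^ 2) / (2 * σ0)
      + ∑ i, (1 + γ i ^ 2) / (σ i * (2 + γ i ^ 2)) := by
    have hN' : (0 : ℝ) < N := by exact_mod_cast (show 0 < N by omega)
    have hI' : (0 : ℝ) < I := by exact_mod_cast hI
    refine add_pos_of_pos_of_nonneg (by positivity) (Finset.sum_nonneg fun i _ => ?_)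
    have := hσ i
    positivity
  have hpd : Λ0.PosDef := hΛ0 ▸ PosDef.one.smul hc
  exact ⟨hΛ0, hpd, hpd.isUnit⟩

/-- The dual scaling matrix with `H_i = Q_i` is a scalar multiple of the identity,
positive definite, and invertible. -/
theorem stmt8
    (N I : ℕ) (hN : 2 ≤ N) (hI : 1 ≤ I) (σ0 : ℝ) (hσ0 : 0 < σ0)
    (γ σ : Fin I → ℝ) (hγ : ∀ i, 0 < γ i ∧ γ i ≤ 1) (hσ : ∀ i, 0 < σ i) :
    let Λ0 : Matrix (Fin N) (Fin N) ℝ :=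
      (((N : ℝ) * (I : ℝ) ^ 2) / (2 * σ0)) • (1 : Matrix (Fin N) (Fin N) ℝ) +
        ∑ i, Amat N (γ i) * (Qmat N (σ i) (γ i))⁻¹ * (Amat N (γ i))ᵀ
    Λ0 = (((N : ℝ) * (I : ℝ) ^ 2) / (2 * σ0)
            + ∑ i, (1 + γ i ^ 2) / (σ i * (2 + γ i ^ 2))) • (1 : Matrix (Fin N) (Fin N) ℝ) ∧
      Λ0.PosDef ∧ IsUnit Λ0 :=
  stmt8_general N I hN hI σ0 hσ0 γ σ hσ
end
end

section
/- Fix i ∈ {1,…,I}, let D ∈ ℝ^{m×2N} be any matrix (the active constraint Jacobian), let μ ≥ 0, and set H = Q_i + μ·Dᵀ D. Then H is symmetric positive definite (hence invertible), I_m + μ·D Q_i⁻¹ Dᵀ is invertible, and A_i H⁻¹ A_iᵀ = ((1 + γ_i²)/(σ_i·(2 + γ_i²)))·I_N − (μ/(σ_i²·(2 + γ_i²)²))·A_i Dᵀ (I_m + μ·D Q_i⁻¹ Dᵀ)⁻¹ D A_iᵀ. -/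
open Matrix BigOperators Finset

noncomputable section

/-!
Since `A Aᵀ = (1 + γ²) I` and `Q = σ (I + Aᵀ A)`, we get `A Q = σ (2 + γ²) A`, i.e. the rows of
`A` are left eigenvectors of `Q`; hence `A Q⁻¹ = (σ (2 + γ²))⁻¹ A` and `Q⁻¹ Aᵀ = (σ (2 + γ²))⁻¹ Aᵀ`
without ever computing `Q⁻¹`. Inverting `H = Q + μ Dᵀ D` by the Woodbury identity and multiplying
by `A` on the left and `Aᵀ` on the right then gives the formula. `H` and `I + μ D Q⁻¹ Dᵀ` are
positive definite as sums of a positive definite matrix and a nonnegative multiple of a Gram matrix.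
-/

namespace Matrix

section Inverse

variable {n m R : Type*} [Fintype n] [DecidableEq n]

/-- Unlike `Matrix.add_mul_mul_inv_eq_sub`, this needs no invertible middle factor, so `μ = 0` is
allowed. -/
theorem inv_add_smul_mul_eq_sub [Fintype m] [DecidableEq m] [CommRing R] (Q : Matrix n n R)
    (U : Matrix n m R) (V : Matrix m n R) (μ : R) (hQ : IsUnit Q)
    (hS : IsUnit (1 + μ • (V * Q⁻¹ * U))) :
    (Q + μ • (U * V))⁻¹ = Q⁻¹ - μ • (Q⁻¹ * U * (1 + μ • (V * Q⁻¹ * U))⁻¹ * V * Q⁻¹) := by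
  have hQQ : Q * Q⁻¹ = 1 := mul_nonsing_inv Q ((isUnit_iff_isUnit_det Q).1 hQ)
  have hSS := mul_nonsing_inv _ ((isUnit_iff_isUnit_det _).1 hS)
  generalize (1 + μ • (V * Q⁻¹ * U))⁻¹ = T at hSS ⊢
  refine inv_eq_right_inv ?_
  calc (Q + μ • (U * V)) * (Q⁻¹ - μ • (Q⁻¹ * U * T * V * Q⁻¹))
      = Q * Q⁻¹ + μ • (U * (1 - (1 + μ • (V * Q⁻¹ * U)) * T) * V * Q⁻¹) := by
        simp only [Matrix.add_mul, Matrix.mul_add, Matrix.mul_sub, Matrix.sub_mul,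
          Matrix.mul_smul, Matrix.smul_mul, smul_sub, smul_add, smul_smul, Matrix.mul_assoc,
          Matrix.one_mul, Matrix.mul_one]
        rw [← Matrix.mul_assoc Q Q⁻¹, hQQ, Matrix.one_mul]
        abel
    _ = 1 := by rw [hQQ, hSS, sub_self]; simp

theorem mul_inv_add_smul_mul_mul_eq_sub [Fintype m] [DecidableEq m] [CommRing R]
    {k l : Type*} {Q : Matrix n n R} (A : Matrix k n R) (B : Matrix n l R) (U : Matrix n m R)
    (V : Matrix m n R) (μ c : R) (hQ : IsUnit Q) (hS : IsUnit (1 + μ • (V * Q⁻¹ * U)))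
    (hAQ : A * Q⁻¹ = c • A) (hQB : Q⁻¹ * B = c • B) :
    A * (Q + μ • (U * V))⁻¹ * B
      = c • (A * B) - (μ * (c * c)) • (A * U * (1 + μ • (V * Q⁻¹ * U))⁻¹ * (V * B)) := by
  rw [inv_add_smul_mul_eq_sub Q U V μ hQ hS]
  generalize (1 + μ • (V * Q⁻¹ * U))⁻¹ = T
  calc A * (Q⁻¹ - μ • (Q⁻¹ * U * T * V * Q⁻¹)) * B
      = A * Q⁻¹ * B - μ • (A * Q⁻¹ * U * T * V * (Q⁻¹ * B)) := by
        simp only [Matrix.mul_sub, Matrix.sub_mul, Matrix.mul_smul, Matrix.smul_mul,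
          Matrix.mul_assoc]
    _ = _ := by
        rw [hAQ, hQB]
        simp only [Matrix.smul_mul, Matrix.mul_smul, smul_smul, Matrix.mul_assoc]

theorem mul_nonsing_inv_eq_inv_smul [Field R] {Q : Matrix n n R} {A : Matrix m n R} {s : R}
    (hQ : IsUnit Q) (hs : s ≠ 0) (h : A * Q = s • A) : A * Q⁻¹ = s⁻¹ • A :=
  calc A * Q⁻¹ = s⁻¹ • (A * Q * Q⁻¹) := by
        rw [h, Matrix.smul_mul, smul_smul, inv_mul_cancel₀ hs, one_smul]
    _ = s⁻¹ • A := by rw [mul_nonsing_inv_cancel_right _ _ ((isUnit_iff_isUnit_det Q).1 hQ)]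

theorem nonsing_inv_mul_eq_inv_smul [Field R] {Q : Matrix n n R} {B : Matrix n m R} {s : R}
    (hQ : IsUnit Q) (hs : s ≠ 0) (h : Q * B = s • B) : Q⁻¹ * B = s⁻¹ • B :=
  calc Q⁻¹ * B = s⁻¹ • (Q⁻¹ * (Q * B)) := by
        rw [h, Matrix.mul_smul, smul_smul, inv_mul_cancel₀ hs, one_smul]
    _ = s⁻¹ • B := by rw [nonsing_inv_mul_cancel_left _ _ ((isUnit_iff_isUnit_det Q).1 hQ)]

end Inverse

theorem PosDef.add_smul_transpose_mul_self {n m : Type*} [Fintype n] [Fintype m]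
    {Q : Matrix n n ℝ} (hQ : Q.PosDef) (D : Matrix m n ℝ) {μ : ℝ} (hμ : 0 ≤ μ) :
    (Q + μ • (Dᵀ * D)).PosDef := by
  simpa only [conjTranspose_eq_transpose_of_trivial] using
    hQ.add_posSemidef ((posSemidef_conjTranspose_mul_self D).smul hμ)

theorem PosSemidef.one_add_smul_mul_mul_transpose {n m : Type*} [Fintype n] [Fintype m]
    [DecidableEq m] {P : Matrix n n ℝ} (hP : P.PosSemidef) (D : Matrix m n ℝ) {μ : ℝ}
    (hμ : 0 ≤ μ) : (1 + μ • (D * P * Dᵀ)).PosDef := by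
  simpa only [conjTranspose_eq_transpose_of_trivial] using
    PosDef.one.add_posSemidef ((hP.mul_mul_conjTranspose_same D).smul hμ)

end Matrix

theorem Amat_mul_transpose (N : ℕ) (γ : ℝ) :
    Amat N γ * (Amat N γ)ᵀ = (1 + γ ^ 2) • (1 : Matrix (Fin N) (Fin N) ℝ) := by
  ext j k
  rcases eq_or_ne j k with rfl | h
  · simp [Amat, mul_apply, Fintype.sum_prod_type, one_apply, sq]
  · simp [Amat, mul_apply, Fintype.sum_prod_type, one_apply, h]

theorem transpose_Amat_mul_Amat (N : ℕ) (γ : ℝ) :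
    (Amat N γ)ᵀ * Amat N γ = kroneckerMap (· * ·) (1 : Matrix (Fin N) (Fin N) ℝ) (Mblk γ) := by
  ext ⟨j, a⟩ ⟨k, b⟩
  rcases eq_or_ne j k with rfl | h
  · fin_cases a <;> fin_cases b <;> simp [Amat, Mblk, mul_apply, one_apply, sq]
  · simp [Amat, mul_apply, one_apply, h, h.symm]

theorem Qmat_eq_smul_one_add (N : ℕ) (σ γ : ℝ) :
    Qmat N σ γ = σ • (1 + (Amat N γ)ᵀ * Amat N γ) := by
  rw [Qmat, transpose_Amat_mul_Amat]

theorem posDef_Qmat (N : ℕ) {σ : ℝ} (γ : ℝ) (hσ : 0 < σ) : (Qmat N σ γ).PosDef := by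
  rw [Qmat_eq_smul_one_add]
  simpa only [one_smul] using
    (PosDef.one.add_smul_transpose_mul_self (Amat N γ) zero_le_one).smul hσ

theorem Amat_mul_Qmat (N : ℕ) (σ γ : ℝ) :
    Amat N γ * Qmat N σ γ = (σ * (2 + γ ^ 2)) • Amat N γ := by
  rw [Qmat_eq_smul_one_add, Matrix.mul_smul, Matrix.mul_add, Matrix.mul_one,
    ← Matrix.mul_assoc, Amat_mul_transpose, Matrix.smul_mul, Matrix.one_mul]
  match_scalars
  ring

theorem Qmat_mul_transpose_Amat (N : ℕ) (σ γ : ℝ) :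
    Qmat N σ γ * (Amat N γ)ᵀ = (σ * (2 + γ ^ 2)) • (Amat N γ)ᵀ := by
  rw [Qmat_eq_smul_one_add, Matrix.smul_mul, Matrix.add_mul, Matrix.one_mul,
    Matrix.mul_assoc, Amat_mul_transpose, Matrix.mul_smul, Matrix.mul_one]
  match_scalars
  ring

theorem Amat_mul_inv_Qmat (N : ℕ) {σ : ℝ} (γ : ℝ) (hσ : 0 < σ) :
    Amat N γ * (Qmat N σ γ)⁻¹ = (σ * (2 + γ ^ 2))⁻¹ • Amat N γ :=
  mul_nonsing_inv_eq_inv_smul (posDef_Qmat N γ hσ).isUnit (by positivity)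
    (Amat_mul_Qmat N σ γ)

theorem inv_Qmat_mul_transpose_Amat (N : ℕ) {σ : ℝ} (γ : ℝ) (hσ : 0 < σ) :
    (Qmat N σ γ)⁻¹ * (Amat N γ)ᵀ = (σ * (2 + γ ^ 2))⁻¹ • (Amat N γ)ᵀ :=
  nonsing_inv_mul_eq_inv_smul (posDef_Qmat N γ hσ).isUnit (by positivity)
    (Qmat_mul_transpose_Amat N σ γ)

theorem stmt9_general
    (N I : ℕ)
    (γ σ : Fin I → ℝ) (hσ : ∀ i, 0 < σ i)
    (i : Fin I) (m : ℕ) (D : Matrix (Fin m) (Fin N × Fin 2) ℝ) (μ : ℝ) (hμ : 0 ≤ μ) :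
    let Q := Qmat N (σ i) (γ i)
    let A := Amat N (γ i)
    let H := Q + μ • (Dᵀ * D)
    Hᵀ = H ∧ H.PosDef ∧ IsUnit H ∧
      IsUnit ((1 : Matrix (Fin m) (Fin m) ℝ) + μ • (D * Q⁻¹ * Dᵀ)) ∧
      A * H⁻¹ * Aᵀ
        = ((1 + γ i ^ 2) / (σ i * (2 + γ i ^ 2))) • (1 : Matrix (Fin N) (Fin N) ℝ)
          - (μ / (σ i ^ 2 * (2 + γ i ^ 2) ^ 2)) •
              (A * Dᵀ * ((1 : Matrix (Fin m) (Fin m) ℝ) + μ • (D * Q⁻¹ * Dᵀ))⁻¹ * (D * Aᵀ)) := by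
  intro Q A H
  have hQ : Q.PosDef := posDef_Qmat N (γ i) (hσ i)
  have hH : H.PosDef := hQ.add_smul_transpose_mul_self D hμ
  have hS : (1 + μ • (D * Q⁻¹ * Dᵀ)).PosDef :=
    hQ.inv.posSemidef.one_add_smul_mul_mul_transpose D hμ
  refine ⟨(conjTranspose_eq_transpose_of_trivial H).symm.trans hH.1.eq, hH, hH.isUnit,
    hS.isUnit, ?_⟩
  rw [mul_inv_add_smul_mul_mul_eq_sub A Aᵀ Dᵀ D μ _ hQ.isUnit hS.isUnit
    (Amat_mul_inv_Qmat N _ (hσ i)) (inv_Qmat_mul_transpose_Amat N _ (hσ i)),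
    Amat_mul_transpose, smul_smul]
  congr 2 <;> field_simp

/-- Woodbury-type formula for `A_i H⁻¹ A_iᵀ` with `H = Q_i + μ Dᵀ D`. -/
theorem stmt9
    (N I : ℕ) (hN : 2 ≤ N) (hI : 1 ≤ I)
    (γ σ : Fin I → ℝ) (hγ : ∀ i, 0 < γ i ∧ γ i ≤ 1) (hσ : ∀ i, 0 < σ i)
    (i : Fin I) (m : ℕ) (D : Matrix (Fin m) (Fin N × Fin 2) ℝ) (μ : ℝ) (hμ : 0 ≤ μ) :
    let Q := Qmat N (σ i) (γ i)
    let A := Amat N (γ i)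
    let H := Q + μ • (Dᵀ * D)
    Hᵀ = H ∧ H.PosDef ∧ IsUnit H ∧
      IsUnit ((1 : Matrix (Fin m) (Fin m) ℝ) + μ • (D * Q⁻¹ * Dᵀ)) ∧
      A * H⁻¹ * Aᵀ
        = ((1 + γ i ^ 2) / (σ i * (2 + γ i ^ 2))) • (1 : Matrix (Fin N) (Fin N) ℝ)
          - (μ / (σ i ^ 2 * (2 + γ i ^ 2) ^ 2)) •
              (A * Dᵀ * ((1 : Matrix (Fin m) (Fin m) ℝ) + μ • (D * Q⁻¹ * Dᵀ))⁻¹ * (D * Aᵀ)) :=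
  stmt9_general N I γ σ hσ i m D μ hμ
end
end
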